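/- arXiv:2306.12678 — 2 statements merged into one kernel-verified Lean document; each statement's English description precedes it below -/
import Mathlib

section
/- Given the first-order stationarity condition -Σ_{i∈J} X̃_i(y_i - ⟨X̃_i, θ⟩) + λω(⟨θ,ω⟩+1) = 0 with ω a subgradient of ‖·‖₁ at θ, the matrix Λ = Σ_{i∈J} Ã_i + λζ + μ annihilates the vector (θ, 1), where Ã_i = [[X̃_iX̃_iᵀ, -X̃_i y_i],[-y_i X̃_iᵀ, y_i²]], ζ = [[ωωᵀ, ω],[ωᵀ, 1]], and μ is zero except for its bottom-right entry μ_{k+1,k+1} = -⟨Σ_{i∈J} Ã_i + λζ, ϑ⟩ with ϑ = (θ,1)(θ,1)ᵀ. -/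
open Finset

/-- Given the first-order stationarity condition
`-∑_{i∈J} X̃ i (y i - ⟨X̃ i, θ⟩) + λ ω (⟨θ, ω⟩ + 1) = 0` with `⟨θ, ω⟩ = ‖θ‖₁`,
the dual matrix `Λ = ∑_{i∈J} Ã i + λ ζ + μ` annihilates the vector `(θ, 1)`. -/
theorem dual_certificate_zero_eigenvalue
    {ι : Type*} (J : Finset ι) {k : ℕ}
    (Xt : ι → Fin k → ℝ) (y : ι → ℝ) (lam : ℝ) (hlam : 0 ≤ lam)
    (θ ω : Fin k → ℝ)
    (hsub : ∑ j, θ j * ω j = ∑ j, |θ j|)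
    (hstat : ∀ j, -(∑ i ∈ J, Xt i j * (y i - ∑ j', Xt i j' * θ j'))
        + lam * ω j * ((∑ j', ω j' * θ j') + 1) = 0) :
    let At : ι → Matrix (Fin k ⊕ Unit) (Fin k ⊕ Unit) ℝ := fun i =>
      Matrix.of fun a b =>
        match a, b with
        | Sum.inl a, Sum.inl b => Xt i a * Xt i b
        | Sum.inl a, Sum.inr _ => -(Xt i a * y i)
        | Sum.inr _, Sum.inl b => -(y i * Xt i b)
        | Sum.inr _, Sum.inr _ => (y i) ^ 2
    let ζ : Matrix (Fin k ⊕ Unit) (Fin k ⊕ Unit) ℝ :=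
      Matrix.vecMulVec (Sum.elim ω (fun _ => 1)) (Sum.elim ω (fun _ => 1))
    let ϑ : Matrix (Fin k ⊕ Unit) (Fin k ⊕ Unit) ℝ :=
      Matrix.vecMulVec (Sum.elim θ (fun _ => 1)) (Sum.elim θ (fun _ => 1))
    let μ : Matrix (Fin k ⊕ Unit) (Fin k ⊕ Unit) ℝ :=
      Matrix.of fun a b =>
        match a, b with
        | Sum.inr _, Sum.inr _ =>
            -(∑ a', ∑ b', ((∑ i ∈ J, At i) + lam • ζ) a' b' * ϑ a' b')
        | _, _ => 0
    let Λ : Matrix (Fin k ⊕ Unit) (Fin k ⊕ Unit) ℝ := (∑ i ∈ J, At i) + lam • ζ + μ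
    Λ.mulVec (Sum.elim θ (fun _ => 1)) = 0 := by
  intro At ζ ϑ μ Λ
  set w : (Fin k ⊕ Unit) → ℝ := Sum.elim θ (fun _ => 1) with hw
  set M : Matrix (Fin k ⊕ Unit) (Fin k ⊕ Unit) ℝ := (∑ i ∈ J, At i) + lam • ζ with hM
  -- raw row identity from stationarity
  have hrow : ∀ a : Fin k, ∑ b, ((∑ i ∈ J, Xt i a * Xt i b) + lam * (ω a * ω b)) * θ b
      + ((∑ i ∈ J, -(Xt i a * y i)) + lam * (ω a * 1)) * 1 = 0 := by
    intro a
    have h := hstat a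
    have key : ∑ b, (∑ i ∈ J, Xt i a * Xt i b) * θ b
        = ∑ i ∈ J, Xt i a * ∑ b, Xt i b * θ b := by
      simp only [Finset.sum_mul, Finset.mul_sum]
      rw [Finset.sum_comm]
      exact Finset.sum_congr rfl fun i _ => Finset.sum_congr rfl fun b _ => by ring
    have key2 : ∑ b, lam * (ω a * ω b) * θ b = lam * ω a * ∑ b, ω b * θ b := by
      simp only [Finset.mul_sum]
      exact Finset.sum_congr rfl fun b _ => by ring
    simp only [add_mul, Finset.sum_add_distrib, key, key2, mul_one]
    have h3 : ∑ i ∈ J, Xt i a * (y i - ∑ j', Xt i j' * θ j')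
        = ∑ i ∈ J, Xt i a * y i - ∑ i ∈ J, Xt i a * ∑ b, Xt i b * θ b := by
      rw [← Finset.sum_sub_distrib]
      exact Finset.sum_congr rfl fun i _ => by ring
    rw [h3] at h
    have h4 : ∑ i ∈ J, -(Xt i a * y i) = -∑ i ∈ J, Xt i a * y i := by simp
    rw [h4]
    linarith [h]
  -- entries of M
  have hMll : ∀ a b : Fin k, M (Sum.inl a) (Sum.inl b)
      = (∑ i ∈ J, Xt i a * Xt i b) + lam * (ω a * ω b) := by
    intro a b
    simp [hM, Matrix.sum_apply, Matrix.vecMulVec_apply, At, ζ]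
  have hMlr : ∀ (a : Fin k) (u : Unit), M (Sum.inl a) (Sum.inr u)
      = (∑ i ∈ J, -(Xt i a * y i)) + lam * (ω a * 1) := by
    intro a u
    simp [hM, Matrix.sum_apply, Matrix.vecMulVec_apply, At, ζ]
  -- M annihilates w on the inl rows
  have hrowM : ∀ a : Fin k, M.mulVec w (Sum.inl a) = 0 := by
    intro a
    rw [Matrix.mulVec, dotProduct, Fintype.sum_sum_type]
    simp only [Finset.univ_unique, Finset.sum_singleton, hMll, hMlr, hw,
      Sum.elim_inl, Sum.elim_inr]
    exact hrow a
  -- quadratic form equals the inr coordinate of M *ᵥ w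
  have hQF : ∑ a', ∑ b', M a' b' * ϑ a' b' = M.mulVec w (Sum.inr ()) := by
    have h1 : ∀ a', ∑ b', M a' b' * ϑ a' b' = w a' * M.mulVec w a' := by
      intro a'
      have hϑ : ∀ a b, ϑ a b = w a * w b := fun a b => rfl
      simp only [hϑ, Matrix.mulVec, dotProduct, Finset.mul_sum]
      exact Finset.sum_congr rfl fun b' _ => by ring
    simp only [h1]
    rw [Fintype.sum_sum_type]
    simp only [hw, Sum.elim_inl, Sum.elim_inr, one_mul, Finset.univ_unique,
      Finset.sum_singleton]
    rw [← hw]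
    simp only [hrowM, mul_zero, Finset.sum_const_zero, zero_add]
  -- conclude
  have hμl : ∀ (a : Fin k) (b : Fin k ⊕ Unit), μ (Sum.inl a) b = 0 := by
    intro a b; cases b <;> rfl
  have hμrl : ∀ (u : Unit) (b : Fin k), μ (Sum.inr u) (Sum.inl b) = 0 := fun _ _ => rfl
  have hμrr : ∀ (u v : Unit), μ (Sum.inr u) (Sum.inr v)
      = -(∑ a', ∑ b', M a' b' * ϑ a' b') := fun _ _ => rfl
  have hΛ : Λ = M + μ := rfl
  funext x
  rw [hΛ, Matrix.add_mulVec, Pi.add_apply]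
  cases x with
  | inl a =>
      have hμ : μ.mulVec w (Sum.inl a) = 0 := by
        rw [Matrix.mulVec, dotProduct]
        simp [hμl]
      rw [hrowM a, hμ]
      simp
  | inr u =>
      have hμ : μ.mulVec w (Sum.inr u) = -(∑ a', ∑ b', M a' b' * ϑ a' b') := by
        rw [Matrix.mulVec, dotProduct, Fintype.sum_sum_type]
        simp only [hμrl, hμrr, zero_mul, Finset.sum_const_zero, zero_add,
          Finset.univ_unique, Finset.sum_singleton, hw, Sum.elim_inr, mul_one]
      rw [hμ, hQF]
      simp
end

section
/- If a symmetric matrix Λ ∈ ℝ^{(k+1)×(k+1)} is positive semidefinite with a one-dimensional kernel spanned by the vector v = (θ, 1), then the unique ϑ satisfying ϑ ⪰ 0, ϑ_{k+1,k+1} = 1, and ⟨Λ, ϑ⟩ = 0 is ϑ = vvᵀ. -/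
open Matrix

/-!
Write `Λ = CᴴC` and `ϑ = DᴴD`. Then `⟨Λ, ϑ⟩` is the squared Frobenius norm of `CDᴴ`, so it
vanishes only if `Λϑ = Cᴴ(CDᴴ)D = 0`. Hence every column of `ϑ` lies in `ker Λ = span v`, i.e.
`ϑ = v cᵀ`; symmetry of `ϑ` together with `v_{k+1} = 1` forces `c = c_{k+1} v`, and the corner
condition gives `c_{k+1} = 1`.
-/

namespace Matrix

section PosSemidef

open scoped ComplexOrder MatrixOrder

variable {𝕜 n : Type*} [RCLike 𝕜] [Fintype n] [DecidableEq n]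

theorem PosSemidef.mul_eq_zero_of_trace_mul_eq_zero {A B : Matrix n n 𝕜}
    (hA : A.PosSemidef) (hB : B.PosSemidef) (h : (A * B).trace = 0) : A * B = 0 := by
  obtain ⟨C, rfl⟩ := CStarAlgebra.nonneg_iff_eq_star_mul_self.mp hA.nonneg
  obtain ⟨D, rfl⟩ := CStarAlgebra.nonneg_iff_eq_star_mul_self.mp hB.nonneg
  have hCD : C * Dᴴ = 0 := by
    rw [← trace_conjTranspose_mul_self_eq_zero_iff, ← h, conjTranspose_mul,
      conjTranspose_conjTranspose, Matrix.mul_assoc, Matrix.trace_mul_comm]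
    simp only [star_eq_conjTranspose, Matrix.mul_assoc]
  simp only [star_eq_conjTranspose, Matrix.mul_assoc, ← Matrix.mul_assoc C, hCD,
    Matrix.zero_mul, Matrix.mul_zero]

end PosSemidef

variable {l m n R : Type*} [CommSemiring R]

theorem exists_eq_vecMulVec_of_mul_eq_zero [Fintype m] {M : Matrix l m R} {N : Matrix m n R}
    {v : m → R} (hker : ∀ x, M *ᵥ x = 0 → ∃ t : R, x = t • v) (h : M * N = 0) :
    ∃ c : n → R, N = vecMulVec v c := by
  have hcol : ∀ j, ∃ t : R, Nᵀ j = t • v := fun j =>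
    hker _ (by ext i; simpa [mul_apply, mulVec, dotProduct] using congr_fun₂ h i j)
  choose c hc using hcol
  exact ⟨c, by ext i j; simpa [vecMulVec_apply, mul_comm] using congr_fun (hc j) i⟩

theorem eq_smul_of_isSymm_vecMulVec {v c : n → R} (hsymm : (vecMulVec v c).IsSymm) {a : n}
    (ha : v a = 1) : c = c a • v := by
  ext i
  simpa [vecMulVec_apply, ha, mul_comm] using hsymm.apply i a

end Matrix

/-- If a symmetric PSD matrix `Λ` has one-dimensional kernel spanned by
`v = (θ, 1)`, then the unique `ϑ` with `ϑ ⪰ 0`, bottom-right entry 1, and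
`⟨Λ, ϑ⟩ = trace(Λϑ) = 0` is `ϑ = vvᵀ`. -/
theorem psd_complementarity_unique_solution
    {k : ℕ}
    (Λ : Matrix (Fin k ⊕ Unit) (Fin k ⊕ Unit) ℝ)
    (hΛ : Λ.PosSemidef)
    (θ : Fin k → ℝ)
    (hker : ∀ x : Fin k ⊕ Unit → ℝ, Λ.mulVec x = 0 ↔
      ∃ t : ℝ, x = t • Sum.elim θ (fun _ => 1))
    (ϑ : Matrix (Fin k ⊕ Unit) (Fin k ⊕ Unit) ℝ)
    (hϑ : ϑ.PosSemidef)
    (hcorner : ϑ (Sum.inr ()) (Sum.inr ()) = 1)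
    (htr : (Λ * ϑ).trace = 0) :
    ϑ = Matrix.vecMulVec (Sum.elim θ (fun _ => 1)) (Sum.elim θ (fun _ => 1)) := by
  have hΛϑ : Λ * ϑ = 0 := hΛ.mul_eq_zero_of_trace_mul_eq_zero hϑ htr
  obtain ⟨c, rfl⟩ := exists_eq_vecMulVec_of_mul_eq_zero (fun x => (hker x).mp) hΛϑ
  have hc : c (Sum.inr ()) = 1 := by simpa [vecMulVec_apply] using hcorner
  rw [eq_smul_of_isSymm_vecMulVec (isHermitian_iff_isSymm.mp hϑ.isHermitian)
    (a := Sum.inr ()) rfl, hc, one_smul]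
end
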